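/- arXiv:1909.13406 — 2 statements merged into one kernel-verified Lean document; each statement's English description precedes it below -/
import Mathlib

section
/- Let C ⊆ 2^{[n]} be an intersection complete code. If C has an open convex realization in ℝ^d, then C has a closed convex realization in ℝ^d. (Hence cdim(C) ≤ odim(C) for intersection complete codes.) -/
/-- The combinatorial code of a collection of sets `U` in `X`: the set of
all `σ ⊆ [n]` such that some point `x ∈ X` lies in exactly the `U i` with `i ∈ σ`. -/
def codeOf {n : ℕ} {X : Type*} (U : Fin n → Set X) : Set (Finset (Fin n)) :=
  {σ | ∃ x : X, ∀ i, i ∈ σ ↔ x ∈ U i}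

/-- `C` has a realization by convex open sets in `ℝ^d`. -/
def HasOpenRealization (n : ℕ) (C : Set (Finset (Fin n))) (d : ℕ) : Prop :=
  ∃ U : Fin n → Set (EuclideanSpace ℝ (Fin d)),
    (∀ i, Convex ℝ (U i)) ∧ (∀ i, IsOpen (U i)) ∧ codeOf U = C

/-- `C` has a realization by convex closed sets in `ℝ^d`. -/
def HasClosedRealization (n : ℕ) (C : Set (Finset (Fin n))) (d : ℕ) : Prop :=
  ∃ U : Fin n → Set (EuclideanSpace ℝ (Fin d)),
    (∀ i, Convex ℝ (U i)) ∧ (∀ i, IsClosed (U i)) ∧ codeOf U = C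
/-!
Shrink every `U i` to its `ε`-erosion `{x | ball x ε ⊆ U i}`, which is closed, and convex when
`U i` is. Each codeword `σ` is witnessed by a point having a ball around it inside `⋂ i ∈ σ, U i`,
so for `ε` small enough (there are finitely many codewords) every codeword survives the erosion.
Conversely the codeword of `x` for the eroded sets is the intersection of the codewords of the
points of `ball x ε`; only finitely many of these are distinct, so intersection completeness keeps
it in the code.
-/

open Filter Topology

namespace Metric

variable {X : Type*} [PseudoMetricSpace X]

def erosion (ε : ℝ) (s : Set X) : Set X :=
  {x | ball x ε ⊆ s}

variable {ε : ℝ} {s : Set X}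

theorem erosion_eq_compl_thickening_compl : erosion ε s = (thickening ε sᶜ)ᶜ := by
  ext x
  simp only [erosion, Set.subset_def, Set.mem_compl_iff, mem_thickening_iff, not_exists, not_and,
    mem_ball, dist_comm x, not_imp_not]
  rfl

theorem isClosed_erosion : IsClosed (erosion ε s) := by
  rw [erosion_eq_compl_thickening_compl]
  exact isOpen_thickening.isClosed_compl

theorem erosion_subset (hε : 0 < ε) : erosion ε s ⊆ s := fun _ hx => hx (mem_ball_self hε)

theorem erosion_eq_biInter_preimage_add {E : Type*} [SeminormedAddCommGroup E] (ε : ℝ)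
    (s : Set E) : erosion ε s = ⋂ v ∈ ball (0 : E) ε, (fun x => x + v) ⁻¹' s := by
  ext x
  simp only [Set.mem_iInter, Set.mem_preimage, mem_ball_zero_iff]
  constructor
  · exact fun h v hv => h (by simpa [dist_eq_norm] using hv)
  · exact fun h y hy => by simpa using h (y - x) (by rwa [← dist_eq_norm])

end Metric

open Metric

theorem Convex.erosion {E : Type*} [SeminormedAddCommGroup E] [NormedSpace ℝ E] {s : Set E}
    (hs : Convex ℝ s) (ε : ℝ) : Convex ℝ (erosion ε s) := by
  rw [erosion_eq_biInter_preimage_add]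
  exact convex_iInter₂ fun v _ => hs.translate_preimage_left v

section codeOf

variable {n : ℕ} {X : Type*} {U : Fin n → Set X}

theorem mem_codeOf_of_forall_mem_iff_subset
    (hIC : ∀ c₁ ∈ codeOf U, ∀ c₂ ∈ codeOf U, c₁ ∩ c₂ ∈ codeOf U) {B : Set X} (hB : B.Nonempty)
    {σ : Finset (Fin n)} (hσ : ∀ i, i ∈ σ ↔ B ⊆ U i) : σ ∈ codeOf U := by
  classical
  set pattern : X → Finset (Fin n) := fun y => Finset.univ.filter (y ∈ U ·)
  set T := (pattern '' B).toFinite.toFinset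
  have hT : T.Nonempty := by simpa [T] using hB
  have hσ_eq_inf : σ = T.inf' hT id := by
    ext i
    simp [T, pattern, hσ, Set.subset_def]
  rw [hσ_eq_inf]
  refine Finset.inf'_mem _ hIC _ _ _ ?_
  simp only [T, Set.Finite.mem_toFinset, Set.forall_mem_image]
  exact fun y _ => ⟨y, by simp [pattern]⟩

variable [PseudoMetricSpace X]

theorem eventually_mem_codeOf_erosion (hU : ∀ i, IsOpen (U i)) {σ : Finset (Fin n)}
    (hσ : σ ∈ codeOf U) : ∀ᶠ ε in 𝓝[>] (0 : ℝ), σ ∈ codeOf fun i => erosion ε (U i) := by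
  obtain ⟨p, hp⟩ := hσ
  have hW : (⋂ i ∈ σ, U i) ∈ 𝓝 p :=
    (isOpen_biInter_finset fun i _ => hU i).mem_nhds (Set.mem_iInter₂.2 fun i hi => (hp i).1 hi)
  obtain ⟨ε₀, hε₀, hball⟩ := Metric.mem_nhds_iff.1 hW
  filter_upwards [Ioo_mem_nhdsGT hε₀] with ε hε
  refine ⟨p, fun i => ⟨fun hi => ?_, fun hi => (hp i).2 (erosion_subset hε.1 hi)⟩⟩
  exact (ball_subset_ball hε.2.le).trans (hball.trans (Set.biInter_subset_of_mem hi))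

theorem exists_pos_codeOf_subset_codeOf_erosion (hU : ∀ i, IsOpen (U i)) :
    ∃ ε > 0, codeOf U ⊆ codeOf fun i => erosion ε (U i) := by
  have h : ∀ᶠ ε in 𝓝[>] (0 : ℝ), ∀ σ ∈ codeOf U, σ ∈ codeOf fun i => erosion ε (U i) :=
    (codeOf U).toFinite.eventually_all.2 fun _ hσ => eventually_mem_codeOf_erosion hU hσ
  obtain ⟨ε, hε, hpos⟩ := (h.and self_mem_nhdsWithin).exists
  exact ⟨ε, hpos, hε⟩

theorem codeOf_erosion_subset (hIC : ∀ c₁ ∈ codeOf U, ∀ c₂ ∈ codeOf U, c₁ ∩ c₂ ∈ codeOf U)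
    {ε : ℝ} (hε : 0 < ε) : (codeOf fun i => erosion ε (U i)) ⊆ codeOf U :=
  fun _ ⟨x, hx⟩ => mem_codeOf_of_forall_mem_iff_subset hIC ⟨x, mem_ball_self hε⟩ hx

end codeOf

theorem closed_of_open_of_intersectionComplete_general {n d : ℕ} (C : Set (Finset (Fin n)))
    (hIC : ∀ c₁ ∈ C, ∀ c₂ ∈ C, c₁ ∩ c₂ ∈ C)
    (h : HasOpenRealization n C d) : HasClosedRealization n C d := by
  obtain ⟨U, hconv, hopen, rfl⟩ := h
  obtain ⟨ε, hε, hsub⟩ := exists_pos_codeOf_subset_codeOf_erosion hopen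
  exact ⟨fun i => erosion ε (U i), fun i => (hconv i).erosion ε, fun _ => isClosed_erosion,
    (codeOf_erosion_subset hIC hε).antisymm hsub⟩

/-- For an intersection complete code, an open convex realization in `ℝ^d` yields a
closed convex realization in `ℝ^d`; hence `cdim C ≤ odim C`. -/
theorem closed_of_open_of_intersectionComplete {n d : ℕ} (C : Set (Finset (Fin n)))
    (hempty : ∅ ∈ C) (hIC : ∀ c₁ ∈ C, ∀ c₂ ∈ C, c₁ ∩ c₂ ∈ C)
    (h : HasOpenRealization n C d) : HasClosedRealization n C d :=
  closed_of_open_of_intersectionComplete_general C hIC h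
end

section
/- For all n ≥ 1, if the code T_n has an open convex realization in ℝ^d, then d ≥ ⌈n/2⌉. (That is, t_n := odim(T_n) ≥ ⌈n/2⌉, so the sequence t_n is unbounded.) -/
/-- The tangled sunflower code `T_n ⊆ 2^{[2n]}` (neurons `0,…,2n-1`, zero-indexed):
codewords are the pairs `{2k, 2k+1}` for `k < n`, the set of even-indexed neurons,
the set of odd-indexed neurons, all singletons, and the empty set. -/
def Tcode (n : ℕ) : Set (Finset (Fin (2*n))) :=
  {σ | (∃ k : Fin n, σ = {⟨2*k.val, by omega⟩, ⟨2*k.val+1, by omega⟩})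
     ∨ σ = Finset.univ.filter (fun i => i.val % 2 = 0)
     ∨ σ = Finset.univ.filter (fun i => i.val % 2 = 1)
     ∨ (∃ i, σ = {i})
     ∨ σ = ∅}

open Set Module RealInnerProductSpace

/-!
The code forces the sets `A k = U (2k)` to form a sunflower: any two of them meet exactly in the
center `E = ⋂ k, A k`. Likewise the `B k = U (2k+1)` form a sunflower with center `O`, the centers
`E` and `O` are disjoint, and each `A k` meets `B k`. A hyperplane separating `E` from `O` thus
meets `A k` or `B k` for every `k` while missing both centers. By Jeffs' sunflower theorem at most
`d` petals of a sunflower of open convex sets in `ℝ^d` meet a hyperplane missing the center, so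
`n ≤ 2d`.

The sunflower theorem is proved by polarity about a point of the center. The polar `Q` of the
center is compact and is the convex hull of the polars `P i` of any two petals, so each extreme
point of `Q` lies in all `P i` but at most one, while the pole of a supporting hyperplane of the
center meeting every petal is a boundary point of `Q` in no `P i`. Induction on the dimension over
the faces of `Q` shows that such a configuration has at most `dim` pieces.
-/

section TopologicalVectorSpace

variable {V : Type*} [AddCommGroup V] [Module ℝ V] [TopologicalSpace V] [ContinuousSMul ℝ V]

theorem exists_one_lt_smul_mem_of_mem_interior {S : Set V} {y : V} (hy : y ∈ interior S) :
    ∃ t : ℝ, 1 < t ∧ t • y ∈ S := by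
  have hcont : Continuous fun t : ℝ => t • y := by fun_prop
  obtain ⟨u, hu, hsub⟩ := exists_Ico_subset_of_mem_nhds ((isOpen_interior.preimage hcont).mem_nhds
    (show (1 : ℝ) • y ∈ interior S by rwa [one_smul])) ⟨2, one_lt_two⟩
  have hmid : (1 + u) / 2 ∈ Ico 1 u := ⟨by linarith, by linarith⟩
  exact ⟨(1 + u) / 2, by linarith, interior_subset (hsub hmid)⟩

variable [IsTopologicalAddGroup V]

theorem isCompact_convexJoin {s t : Set V} (hs : IsCompact s) (ht : IsCompact t) :
    IsCompact (convexJoin ℝ s t) := by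
  have : convexJoin ℝ s t =
      (fun q : ℝ × V × V => (1 - q.1) • q.2.1 + q.1 • q.2.2) '' (Icc 0 1 ×ˢ s ×ˢ t) := by
    ext x
    simp only [mem_convexJoin, segment_eq_image, mem_image, mem_prod, Prod.exists]
    constructor
    · rintro ⟨a, ha, b, hb, θ, hθ, rfl⟩
      exact ⟨θ, a, b, ⟨hθ, ha, hb⟩, rfl⟩
    · rintro ⟨θ, a, b, ⟨hθ, ha, hb⟩, rfl⟩
      exact ⟨a, ha, b, hb, θ, hθ, rfl⟩
  rw [this]
  exact (isCompact_Icc.prod (hs.prod ht)).image (by fun_prop)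

theorem IsOpen.closure_inter_closure_subset {A B : Set V} (hA : IsOpen A) (hB : IsOpen B)
    (hAc : Convex ℝ A) (hBc : Convex ℝ B) (hAB : (A ∩ B).Nonempty) :
    closure A ∩ closure B ⊆ closure (A ∩ B) := by
  rintro x ⟨hxA, hxB⟩
  obtain ⟨a, haA, haB⟩ := hAB
  have hseg : openSegment ℝ a x ⊆ A ∩ B := fun z hz =>
    ⟨interior_subset (hAc.openSegment_interior_closure_subset_interior (by rwa [hA.interior_eq])
      hxA hz), interior_subset (hBc.openSegment_interior_closure_subset_interior
      (by rwa [hB.interior_eq]) hxB hz)⟩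
  exact closure_mono hseg (segment_subset_closure_openSegment (right_mem_segment ℝ a x))

end TopologicalVectorSpace

section AffineMap

variable {V W : Type*} [AddCommGroup V] [Module ℝ V] [AddCommGroup W] [Module ℝ W]

theorem AffineMap.mem_extremePoints_of_mem_extremePoints_preimage (f : W →ᵃ[ℝ] V)
    (hf : Function.Injective f) {s : Set V} (hs : s ⊆ range f)
    {x : W} (hx : x ∈ (f ⁻¹' s).extremePoints ℝ) : f x ∈ s.extremePoints ℝ := by
  refine ⟨hx.1, fun y hy z hz hyz => ?_⟩
  obtain ⟨y, rfl⟩ := hs hy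
  obtain ⟨z, rfl⟩ := hs hz
  rw [← image_openSegment, hf.mem_set_image] at hyz
  obtain ⟨rfl, rfl⟩ := hx.2 hy hz hyz
  simp

end AffineMap

section NormedSpace

variable {V : Type*} [NormedAddCommGroup V] [NormedSpace ℝ V]

theorem IsOpen.exists_apply_gt {A : Set V}
    (hA : IsOpen A) {f : StrongDual ℝ V} (hf : f ≠ 0) {x : V} (hx : x ∈ A) :
    ∃ y ∈ A, f x < f y := by
  obtain ⟨b, hb, hsub⟩ := exists_Ico_subset_of_mem_nhds
    ((f.isOpenMap_of_ne_zero hf A hA).mem_nhds (mem_image_of_mem f hx)) ⟨f x + 1, lt_add_one _⟩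
  have hmid : (f x + b) / 2 ∈ Ico (f x) b := ⟨by linarith, by linarith⟩
  obtain ⟨y, hy, hfy⟩ := hsub hmid
  exact ⟨y, hy, by linarith⟩

theorem IsCompact.exists_mem_frontier_mem_segment {K : Set V} (hK : IsCompact K) {e v : V}
    (hv : v ∈ K) (hev : e ≠ v) : ∃ b ∈ frontier K, v ∈ segment ℝ e b := by
  set g : ℝ → V := fun t => e + t • (v - e)
  have hgc : Continuous g := by fun_prop
  have hge : Topology.IsClosedEmbedding g := (Homeomorph.addLeft e).isClosedEmbedding.comp
    (isClosedEmbedding_smul_left (sub_ne_zero.2 hev.symm))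
  have hT : IsCompact (g ⁻¹' K ∩ Ici 1) :=
    (hge.isCompact_preimage hK).inter_right isClosed_Ici
  have h1 : (1 : ℝ) ∈ g ⁻¹' K ∩ Ici 1 := ⟨by simpa [g] using hv, mem_Ici.2 le_rfl⟩
  set t := sSup (g ⁻¹' K ∩ Ici 1)
  have ht : t ∈ g ⁻¹' K ∩ Ici 1 := hT.sSup_mem ⟨1, h1⟩
  have ht1 : 1 ≤ t := ht.2
  refine ⟨g t, ⟨subset_closure ht.1, fun hint => ?_⟩, ?_⟩
  · obtain ⟨u, hu, hsub⟩ := exists_Ico_subset_of_mem_nhds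
      ((isOpen_interior.preimage hgc).mem_nhds hint) ⟨t + 1, lt_add_one t⟩
    have hmid : (t + u) / 2 ∈ Ico t u := ⟨by linarith, by linarith⟩
    have hmem : (t + u) / 2 ∈ g ⁻¹' K ∩ Ici 1 :=
      ⟨interior_subset (s := K) (hsub hmid), mem_Ici.2 (by linarith [hmid.1])⟩
    linarith [le_csSup hT.bddAbove hmem]
  · have ht0 : 0 < t := by linarith
    refine ⟨1 - t⁻¹, t⁻¹, by simpa using inv_le_one_of_one_le₀ ht1, by positivity, by ring, ?_⟩
    simp only [g, smul_add, smul_smul, inv_mul_cancel₀ ht0.ne']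
    module

variable [FiniteDimensional ℝ V]

theorem Convex.exists_ne_zero_forall_le_of_notMem_interior {K : Set V} (hK : Convex ℝ K) {v : V}
    (hv : v ∈ K) (hvi : v ∉ interior K) : ∃ φ : StrongDual ℝ V, φ ≠ 0 ∧ ∀ x ∈ K, φ x ≤ φ v := by
  by_cases hint : (interior K).Nonempty
  · exact geometric_hahn_banach_of_nonempty_interior_point hK hvi hint
  have hspan : (affineSpan ℝ K).direction < ⊤ := by
    rw [lt_top_iff_ne_top, Ne, AffineSubspace.direction_eq_top_iff_of_nonempty
      ((affineSpan_nonempty ℝ).2 ⟨v, hv⟩), ← hK.interior_nonempty_iff_affineSpan_eq_top]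
    exact hint
  obtain ⟨g, hg0, hg⟩ := Submodule.exists_le_ker_of_lt_top _ hspan
  refine ⟨LinearMap.toContinuousLinearMap g, by simpa using hg0, fun x hx => le_of_eq ?_⟩
  have := hg (AffineSubspace.vsub_mem_direction (subset_affineSpan ℝ K hx)
    (subset_affineSpan ℝ K hv))
  simpa [sub_eq_zero] using this

end NormedSpace

section ExtremeCover

variable {V : Type*} [NormedAddCommGroup V] [NormedSpace ℝ V] [FiniteDimensional ℝ V]
  {ι : Type*}

structure ExtremeCover (K : Set V) (P : ι → Set V) (v : V) : Prop where
  isCompact : IsCompact K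
  convex : Convex ℝ K
  convex_piece : ∀ i, Convex ℝ (P i)
  subsingleton_notMem : ∀ x ∈ K.extremePoints ℝ, {i | x ∉ P i}.Subsingleton
  mem : v ∈ K
  notMem : ∀ i, v ∉ P i

namespace ExtremeCover

variable {K : Set V} {P : ι → Set V} {v : V}

theorem exists_submodule_of_notMem_interior (h : ExtremeCover K P v) (hv : v ∉ interior K) :
    ∃ W : Submodule ℝ V, finrank ℝ W + 1 = finrank ℝ V ∧
      ∃ (K' : Set W) (P' : ι → Set W), ExtremeCover K' P' 0 := by
  -- the face of `K` exposed by a supporting functional `φ` at `v`, translated into `ker φ`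
  obtain ⟨φ, hφ0, hφ⟩ := h.convex.exists_ne_zero_forall_le_of_notMem_interior h.mem hv
  set W := LinearMap.ker (φ : V →ₗ[ℝ] ℝ)
  let e : W →ᵃ[ℝ] V := W.subtype.toAffineMap + AffineMap.const ℝ W v
  have he : ∀ w, e w = w + v := fun _ => rfl
  have he_inj : Function.Injective e := fun w w' hww' => Subtype.ext (by simpa [he] using hww')
  have he_closed : Topology.IsClosedEmbedding e := (Homeomorph.addRight v).isClosedEmbedding.comp
    W.closed_of_finiteDimensional.isClosedEmbedding_subtypeVal
  set F := φ.toExposed K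
  have hF : IsExposed ℝ K F := ContinuousLinearMap.toExposed.isExposed
  have hFe : F ⊆ range e := fun x hx =>
    ⟨⟨x - v, by simp [W, le_antisymm (hφ x hx.1) (hx.2 v h.mem)]⟩, by simp [he]⟩
  refine ⟨W, Module.Dual.finrank_ker_add_one_of_ne_zero (by exact_mod_cast hφ0),
    e ⁻¹' F, fun i => e ⁻¹' P i, ⟨he_closed.isCompact_preimage (hF.isCompact h.isCompact),
    (hF.convex h.convex).affine_preimage e, fun i => (h.convex_piece i).affine_preimage e,
    fun x hx => h.subsingleton_notMem _ (hF.isExtreme.extremePoints_subset_extremePoints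
      (e.mem_extremePoints_of_mem_extremePoints_preimage he_inj hFe hx)), ?_, fun i => ?_⟩⟩
  · show e 0 ∈ F
    rw [he, ZeroMemClass.coe_zero, zero_add]
    exact ⟨h.mem, hφ⟩
  · simpa [he] using h.notMem i

theorem card_le_finrank_add_one [Fintype ι] (h : ExtremeCover K P v) :
    Fintype.card ι ≤ finrank ℝ V + 1 := by
  induction hd : finrank ℝ V using Nat.strong_induction_on generalizing V ι with
  | _ d IH =>
  classical
  obtain ⟨e, he⟩ := h.isCompact.extremePoints_nonempty ⟨v, h.mem⟩
  rcases eq_or_ne e v with rfl | hev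
  · have : Fintype.card ι ≤ 1 := Fintype.card_le_one_iff_subsingleton.2
      ⟨fun i j => h.subsingleton_notMem _ he (h.notMem i) (h.notMem j)⟩
    omega
  -- The ray from `e` through `v` leaves `K` at `b`. Each `P i` misses `e` or `b`, since it
  -- misses `v`; at most one misses `e`, and those missing `b` live on a face of lower dimension.
  obtain ⟨b, hb, hvb⟩ := h.isCompact.exists_mem_frontier_mem_segment h.mem hev
  have hb' : ExtremeCover K (fun i : {i // b ∉ P i} => P i) b :=
    ⟨h.isCompact, h.convex, fun i => h.convex_piece i,
      fun x hx _ hi _ hj => Subtype.ext (h.subsingleton_notMem x hx hi hj),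
      h.isCompact.isClosed.frontier_subset hb, fun i => i.2⟩
  obtain ⟨W, hW, K', P', h'⟩ := hb'.exists_submodule_of_notMem_interior hb.2
  have hb_card := IH _ (by omega) h' rfl
  have he_card : Fintype.card {i // e ∉ P i} ≤ 1 := Fintype.card_le_one_iff_subsingleton.2
    ⟨fun i j => Subtype.ext (h.subsingleton_notMem e he i.2 j.2)⟩
  have hcover : ∀ i, e ∉ P i ∨ b ∉ P i := fun i => by
    by_contra! hi
    exact h.notMem i ((h.convex_piece i).segment_subset hi.1 hi.2 hvb)
  have := Fintype.card_subtype_or (e ∉ P ·) (b ∉ P ·)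
  rw [Fintype.card_congr (Equiv.subtypeUnivEquiv hcover)] at this
  omega

theorem card_le_finrank [Fintype ι] (h : ExtremeCover K P v) (hv : v ∉ interior K) :
    Fintype.card ι ≤ finrank ℝ V := by
  obtain ⟨W, hW, K', P', h'⟩ := h.exists_submodule_of_notMem_interior hv
  have := h'.card_le_finrank_add_one
  omega

end ExtremeCover

section InnerPolar

variable {V : Type*} [NormedAddCommGroup V] [InnerProductSpace ℝ V]

/-- The one-sided polar (Mathlib's `LinearMap.polar` bounds `‖⟪y, x⟫‖` instead). -/
def innerPolar (K : Set V) : Set V := {y | ∀ x ∈ K, ⟪y, x⟫ ≤ 1}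

theorem zero_mem_innerPolar (K : Set V) : 0 ∈ innerPolar K := fun x _ => by simp

theorem innerPolar_anti {K L : Set V} (hKL : K ⊆ L) : innerPolar L ⊆ innerPolar K :=
  fun _ hy x hx => hy x (hKL hx)

theorem convex_innerPolar (K : Set V) : Convex ℝ (innerPolar K) := by
  intro y hy z hz a b ha hb hab x hx
  rw [inner_add_left, real_inner_smul_left, real_inner_smul_left]
  nlinarith [hy x hx, hz x hx]

theorem isClosed_innerPolar (K : Set V) : IsClosed (innerPolar K) := by
  simp only [innerPolar, ofPred_forall]
  exact isClosed_biInter fun x _ => isClosed_le (by fun_prop) continuous_const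

theorem innerPolar_subset_closedBall {K : Set V} {r : ℝ} (hr : 0 < r) (hK : Metric.ball 0 r ⊆ K) :
    innerPolar K ⊆ Metric.closedBall 0 (2 / r) := by
  intro y hy
  rw [mem_closedBall_zero_iff, le_div_iff₀ hr]
  rcases eq_or_ne y 0 with rfl | hy0
  · simp
  have hx : (r / 2 / ‖y‖) • y ∈ K := hK (by
    rw [mem_ball_zero_iff, norm_smul, Real.norm_of_nonneg (by positivity),
      div_mul_cancel₀ _ (norm_ne_zero_iff.2 hy0)]
    linarith)
  have := hy _ hx
  rw [real_inner_smul_right, real_inner_self_eq_norm_sq] at this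
  have : r / 2 * ‖y‖ ≤ 1 := by
    convert this using 1
    field_simp
  linarith

variable [FiniteDimensional ℝ V]

theorem isCompact_innerPolar {K : Set V} (hK : K ∈ nhds 0) : IsCompact (innerPolar K) := by
  obtain ⟨r, hr, hball⟩ := Metric.mem_nhds_iff.1 hK
  exact (ProperSpace.isCompact_closedBall _ _).of_isClosed_subset (isClosed_innerPolar K)
    (innerPolar_subset_closedBall hr hball)

theorem exists_inner_lt_one_of_notMem {K : Set V} (hKc : Convex ℝ K) (hK : IsClosed K)
    (hK0 : 0 ∈ K) {x : V} (hx : x ∉ K) : ∃ y, (∀ z ∈ K, ⟪y, z⟫ < 1) ∧ 1 < ⟪y, x⟫ := by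
  obtain ⟨φ, u, hφK, hφx⟩ := geometric_hahn_banach_closed_point hKc hK hx
  have hu : 0 < u := by simpa using hφK 0 hK0
  have hy : ∀ z, ⟪u⁻¹ • (InnerProductSpace.toDual ℝ V).symm φ, z⟫ = φ z / u := fun z => by
    rw [real_inner_smul_left, InnerProductSpace.toDual_symm_apply, inv_mul_eq_div]
  refine ⟨u⁻¹ • (InnerProductSpace.toDual ℝ V).symm φ, fun z hz => ?_, ?_⟩
  · rw [hy, div_lt_one hu]; exact hφK z hz
  · rw [hy, one_lt_div hu]; exact hφx

theorem innerPolar_inter {A B : Set V} (hA : IsOpen A) (hB : IsOpen B) (hAc : Convex ℝ A)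
    (hBc : Convex ℝ B) (hA0 : 0 ∈ A) (hB0 : 0 ∈ B) :
    innerPolar (A ∩ B) = convexHull ℝ (innerPolar A ∪ innerPolar B) := by
  refine Subset.antisymm (fun g hg => ?_) (convexHull_min
    (union_subset (innerPolar_anti inter_subset_left) (innerPolar_anti inter_subset_right))
    (convex_innerPolar _))
  have hK : IsCompact (convexHull ℝ (innerPolar A ∪ innerPolar B)) := by
    rw [(convex_innerPolar A).convexHull_union (convex_innerPolar B)
      ⟨0, zero_mem_innerPolar A⟩ ⟨0, zero_mem_innerPolar B⟩]
    exact isCompact_convexJoin (isCompact_innerPolar (hA.mem_nhds hA0))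
      (isCompact_innerPolar (hB.mem_nhds hB0))
  by_contra hgK
  obtain ⟨x, hxK, hgx⟩ := exists_inner_lt_one_of_notMem (convex_convexHull ℝ _) hK.isClosed
    (subset_convexHull ℝ _ (Or.inl (zero_mem_innerPolar A))) hgK
  -- `x` lies in the closure of each of `A`, `B`, since otherwise a separating `y` would lie in
  -- the polar of that set while `⟪y, x⟫ > 1`.
  have hclosure : ∀ {C : Set V}, Convex ℝ C → 0 ∈ C → innerPolar C ⊆ innerPolar A ∪ innerPolar B →
      x ∈ closure C := fun {C} hCc hC0 hCsub => by
    by_contra hxC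
    obtain ⟨y, hyC, hyx⟩ := exists_inner_lt_one_of_notMem hCc.closure isClosed_closure
      (subset_closure hC0) hxC
    have hy : y ∈ innerPolar C := fun z hz => (hyC z (subset_closure hz)).le
    linarith [hxK y (subset_convexHull ℝ _ (hCsub hy)), real_inner_comm x y]
  have hxAB : x ∈ closure (A ∩ B) := hA.closure_inter_closure_subset hB hAc hBc ⟨0, hA0, hB0⟩
    ⟨hclosure hAc hA0 subset_union_left, hclosure hBc hB0 subset_union_right⟩
  have : ⟪g, x⟫ ≤ 1 := closure_minimal (s := A ∩ B) (t := {z | ⟪g, z⟫ ≤ 1}) (fun z hz => hg z hz)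
    (isClosed_le (continuous_const.inner continuous_id) continuous_const) hxAB
  linarith [real_inner_comm x g]

end InnerPolar

structure IsSunflower {α ι : Type*} (A : ι → Set α) (E : Set α) : Prop where
  subset_petal : ∀ i, E ⊆ A i
  inter_subset : Pairwise fun i j => A i ∩ A j ⊆ E

namespace IsSunflower

variable {α β ι : Type*} {A : ι → Set α} {E : Set α}

theorem inter_eq (h : IsSunflower A E) {i j : ι} (hij : i ≠ j) : A i ∩ A j = E :=
  (h.inter_subset hij).antisymm (subset_inter (h.subset_petal i) (h.subset_petal j))

theorem preimage (h : IsSunflower A E) (g : β → α) :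
    IsSunflower (fun i => g ⁻¹' A i) (g ⁻¹' E) :=
  ⟨fun i => preimage_mono (h.subset_petal i), fun _ _ hij => preimage_mono (h.inter_subset hij)⟩

theorem comp (h : IsSunflower A E) {κ : Type*} {g : κ → ι} (hg : Function.Injective g) :
    IsSunflower (fun k => A (g k)) E :=
  ⟨fun k => h.subset_petal (g k), fun _ _ hkl => h.inter_subset (hg.ne hkl)⟩

end IsSunflower

section Sunflower

variable {V : Type*} [NormedAddCommGroup V] [InnerProductSpace ℝ V] [FiniteDimensional ℝ V]
  {ι : Type*} [Fintype ι] {A : ι → Set V} {E : Set V} {f : StrongDual ℝ V} {c : ℝ}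

theorem IsSunflower.card_le_finrank_of_isLUB (hA : IsSunflower A E) (hAo : ∀ i, IsOpen (A i))
    (hAc : ∀ i, Convex ℝ (A i)) (hEo : IsOpen E) (hE0 : 0 ∈ E) (hc0 : 0 < c)
    (hc : IsLUB (f '' E) c) (hfA : ∀ i, ∃ x ∈ A i, f x = c) : Fintype.card ι ≤ finrank ℝ V := by
  -- the pole of the supporting hyperplane `{f = c}` of `E`
  set v := c⁻¹ • (InnerProductSpace.toDual ℝ V).symm f
  have hv : ∀ x, ⟪v, x⟫ = f x / c := fun x => by
    rw [real_inner_smul_left, InnerProductSpace.toDual_symm_apply, inv_mul_eq_div]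
  refine ExtremeCover.card_le_finrank (K := innerPolar E) (P := fun i => innerPolar (A i)) (v := v)
    ⟨isCompact_innerPolar (hEo.mem_nhds hE0), convex_innerPolar E, fun i => convex_innerPolar _,
      fun x hx i hi j hj => ?_, fun x hx => ?_, fun i hvi => ?_⟩ ?_
  · by_contra hij
    rw [← hA.inter_eq hij, innerPolar_inter (hAo i) (hAo j) (hAc i) (hAc j)
      (hA.subset_petal i hE0) (hA.subset_petal j hE0)] at hx
    rcases extremePoints_convexHull_subset hx with hxi | hxj
    exacts [hi hxi, hj hxj]
  · rw [hv, div_le_one hc0]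
    exact hc.1 (mem_image_of_mem f hx)
  · obtain ⟨x, hx, rfl⟩ := hfA i
    have hf0 : f ≠ 0 := by
      rintro rfl
      exact hc0.ne (by simp)
    obtain ⟨y, hy, hxy⟩ := (hAo i).exists_apply_gt hf0 hx
    have := hvi y hy
    rw [hv, div_le_one hc0] at this
    linarith
  · intro hvi
    obtain ⟨t, ht, hts⟩ := exists_one_lt_smul_mem_of_mem_interior hvi
    have hbound : c ≤ c / t := hc.2 <| by
      rintro _ ⟨x, hx, rfl⟩
      have := hts x hx
      rw [real_inner_smul_left, hv, mul_div_assoc', div_le_one hc0] at this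
      rw [le_div_iff₀ (by linarith)]
      linarith
    rw [le_div_iff₀ (by linarith)] at hbound
    nlinarith

theorem IsSunflower.card_le_finrank (hA : IsSunflower A E) (hAo : ∀ i, IsOpen (A i))
    (hAc : ∀ i, Convex ℝ (A i)) (hEo : IsOpen E) (hE : E.Nonempty) (hfE : ∀ x ∈ E, f x < c)
    (hfA : ∀ i, ∃ x ∈ A i, f x = c) : Fintype.card ι ≤ finrank ℝ V := by
  -- Move a point `p` of the center to `0` and lower the hyperplane to the supporting level of
  -- the center; each petal still reaches it, on the segment from its point on `{f = c}` to `p`.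
  obtain ⟨p, hp⟩ := hE
  rcases isEmpty_or_nonempty ι with hι | ⟨⟨i₀⟩⟩
  · simp
  have hf0 : f ≠ 0 := by
    rintro rfl
    obtain ⟨x, -, hx⟩ := hfA i₀
    exact (hfE p hp).ne (by simpa using hx)
  let g : V → V := (· + p)
  have hg : Continuous g := continuous_add_const p
  have hE0 : 0 ∈ g ⁻¹' E := by simpa [g] using hp
  have hbdd : ∀ y ∈ f '' (g ⁻¹' E), y ≤ c - f p := by
    rintro _ ⟨x, hx, rfl⟩
    have := hfE _ hx
    simp only [g, map_add] at this
    linarith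
  have hs : IsLUB (f '' (g ⁻¹' E)) (sSup (f '' (g ⁻¹' E))) :=
    isLUB_csSup ⟨0, 0, hE0, map_zero f⟩ ⟨c - f p, hbdd⟩
  have hs0 : 0 < sSup (f '' (g ⁻¹' E)) := by
    obtain ⟨y, hy, hy0⟩ := (hEo.preimage hg).exists_apply_gt hf0 hE0
    exact (by simpa using hy0 : 0 < f y).trans_le (hs.1 (mem_image_of_mem f hy))
  refine (hA.preimage g).card_le_finrank_of_isLUB (fun i => (hAo i).preimage hg)
    (fun i => (hAc i).translate_preimage_left p) (hEo.preimage hg) hE0 hs0 hs fun i => ?_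
  obtain ⟨x, hx, hfx⟩ := hfA i
  have hxp : x - p ∈ g ⁻¹' A i := by simpa [g] using hx
  exact ((hAc i).translate_preimage_left p).isPreconnected.intermediate_value
    ((hA.preimage g).subset_petal i hE0) hxp f.continuous.continuousOn
    ⟨by simpa using hs.1 (mem_image_of_mem f hE0),
      hs.2 hbdd |>.trans (by rw [map_sub, hfx])⟩

end Sunflower

section TangledSunflower

variable {V : Type*} [NormedAddCommGroup V] [InnerProductSpace ℝ V] [FiniteDimensional ℝ V]

theorem card_le_two_mul_finrank_of_isSunflower {n : ℕ} {A B : Fin n → Set V}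
    (hAo : ∀ k, IsOpen (A k)) (hAc : ∀ k, Convex ℝ (A k)) (hBo : ∀ k, IsOpen (B k))
    (hBc : ∀ k, Convex ℝ (B k)) (hA : IsSunflower A (⋂ k, A k)) (hB : IsSunflower B (⋂ k, B k))
    (hE : (⋂ k, A k).Nonempty) (hO : (⋂ k, B k).Nonempty) (hEO : Disjoint (⋂ k, A k) (⋂ k, B k))
    (hAB : ∀ k, (A k ∩ B k).Nonempty) : n ≤ 2 * finrank ℝ V := by
  classical
  have hEo := isOpen_iInter_of_finite hAo
  have hOo := isOpen_iInter_of_finite hBo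
  obtain ⟨f, s, hfE, hfO⟩ := geometric_hahn_banach_open_open (convex_iInter hAc) hEo
    (convex_iInter hBc) hOo hEO
  obtain ⟨p, hp⟩ := hE
  obtain ⟨q, hq⟩ := hO
  -- a point `z ∈ A k ∩ B k` and the center on the other side of `{f = s}` are joined in a petal
  have hcover : ∀ k, (∃ x ∈ A k, f x = s) ∨ ∃ x ∈ B k, f x = s := fun k => by
    obtain ⟨z, hzA, hzB⟩ := hAB k
    rcases le_total s (f z) with hz | hz
    · exact .inl ((hAc k).isPreconnected.intermediate_value (hA.subset_petal k hp) hzA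
        f.continuous.continuousOn ⟨(hfE p hp).le, hz⟩)
    · exact .inr ((hBc k).isPreconnected.intermediate_value hzB (hB.subset_petal k hq)
        f.continuous.continuousOn ⟨hz, (hfO q hq).le⟩)
  set SA := Finset.univ.filter fun k => ∃ x ∈ A k, f x = s
  set SB := Finset.univ.filter fun k => ∃ x ∈ B k, f x = s
  have hSA : SA.card ≤ finrank ℝ V := by
    simpa using (hA.comp Subtype.val_injective).card_le_finrank (ι := SA) (fun k => hAo k)
      (fun k => hAc k) hEo ⟨p, hp⟩ hfE fun k => (Finset.mem_filter.1 k.2).2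
  have hSB : SB.card ≤ finrank ℝ V := by
    simpa using (hB.comp Subtype.val_injective).card_le_finrank (ι := SB) (f := -f) (c := -s)
      (fun k => hBo k) (fun k => hBc k) hOo ⟨q, hq⟩ (fun x hx => by simpa using hfO x hx)
      fun k => by simpa using (Finset.mem_filter.1 k.2).2
  calc n = (Finset.univ : Finset (Fin n)).card := by simp
    _ ≤ (SA ∪ SB).card := Finset.card_le_card fun k _ => by simpa [SA, SB] using hcover k
    _ ≤ 2 * finrank ℝ V := by linarith [Finset.card_union_le SA SB]

end TangledSunflower

theorem Tcode.eq_filter_of_mem {n : ℕ} {σ : Finset (Fin (2 * n))} (hσ : σ ∈ Tcode n)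
    {i j : Fin (2 * n)} (hi : i ∈ σ) (hj : j ∈ σ) (hij : i ≠ j) (hpar : i.val % 2 = j.val % 2) :
    σ = Finset.univ.filter (fun l => l.val % 2 = i.val % 2) := by
  rcases hσ with ⟨k, rfl⟩ | rfl | rfl | ⟨m, rfl⟩ | rfl
  · simp only [Finset.mem_insert, Finset.mem_singleton, Fin.ext_iff] at hi hj
    exact absurd (Fin.ext (by omega)) hij
  · simp_all
  · simp_all
  · simp_all
  · simp at hi

section Realization

variable {X : Type*} {n : ℕ} {U : Fin (2 * n) → Set X}

theorem mem_iff_of_codeOf_eq_Tcode (hU : codeOf U = Tcode n) {x : X} {i j : Fin (2 * n)}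
    (hij : i ≠ j) (hpar : i.val % 2 = j.val % 2) (hi : x ∈ U i) (hj : x ∈ U j) (l : Fin (2 * n)) :
    x ∈ U l ↔ l.val % 2 = i.val % 2 := by
  classical
  have hσ : Finset.univ.filter (x ∈ U ·) ∈ Tcode n := hU ▸ ⟨x, by simp⟩
  have := congrArg (l ∈ ·) (Tcode.eq_filter_of_mem hσ (by simpa) (by simpa) hij hpar)
  simpa using this

theorem isSunflower_of_codeOf_eq_Tcode (hU : codeOf U = Tcode n) {r : ℕ} (hr : r < 2) :
    IsSunflower (fun k : Fin n => U ⟨2 * k + r, by omega⟩) (⋂ k : Fin n, U ⟨2 * k + r, by omega⟩) :=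
  ⟨iInter_subset _, fun k l hkl x ⟨hxk, hxl⟩ => mem_iInter.2 fun m =>
    (mem_iff_of_codeOf_eq_Tcode hU (by simpa [Fin.ext_iff] using hkl) (by simp only; omega)
      hxk hxl _).2 (by simp only; omega)⟩

theorem nonempty_iInter_of_codeOf_eq_Tcode (hU : codeOf U = Tcode n) {r : ℕ} (hr : r < 2) :
    (⋂ k : Fin n, U ⟨2 * k + r, by omega⟩).Nonempty := by
  have hσ : Finset.univ.filter (fun i : Fin (2 * n) => i.val % 2 = r) ∈ codeOf U := by
    rw [hU]; interval_cases r <;> simp [Tcode]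
  obtain ⟨x, hx⟩ := hσ
  exact ⟨x, mem_iInter.2 fun k => (hx _).1 (by simp; omega)⟩

theorem disjoint_iInter_of_codeOf_eq_Tcode (hU : codeOf U = Tcode n) (hn : 2 ≤ n) :
    Disjoint (⋂ k : Fin n, U ⟨2 * k, by omega⟩) (⋂ k : Fin n, U ⟨2 * k + 1, by omega⟩) := by
  rw [disjoint_left]
  intro x hxA hxB
  have h0 := mem_iInter.1 hxA ⟨0, by omega⟩
  have h1 := mem_iInter.1 hxA ⟨1, by omega⟩
  have := (mem_iff_of_codeOf_eq_Tcode hU (by simp [Fin.ext_iff]) (by simp) h0 h1 _).1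
    (mem_iInter.1 hxB ⟨0, by omega⟩)
  simp at this

theorem nonempty_inter_of_codeOf_eq_Tcode (hU : codeOf U = Tcode n) (k : Fin n) :
    (U ⟨2 * k, by omega⟩ ∩ U ⟨2 * k + 1, by omega⟩).Nonempty := by
  have hσ : ({⟨2 * k, by omega⟩, ⟨2 * k + 1, by omega⟩} : Finset (Fin (2 * n))) ∈ codeOf U :=
    hU ▸ Or.inl ⟨k, rfl⟩
  obtain ⟨x, hx⟩ := hσ
  exact ⟨x, (hx _).1 (by simp), (hx _).1 (by simp)⟩

theorem nontrivial_of_codeOf_eq_Tcode (hU : codeOf U = Tcode n) (hn : 1 ≤ n) : Nontrivial X := by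
  obtain ⟨x, hx⟩ : (∅ : Finset (Fin (2 * n))) ∈ codeOf U :=
    hU ▸ Or.inr (Or.inr (Or.inr (Or.inr rfl)))
  obtain ⟨y, hy⟩ : ({⟨0, by omega⟩} : Finset (Fin (2 * n))) ∈ codeOf U := by
    rw [hU]
    exact Or.inr (Or.inr (Or.inr (Or.inl ⟨_, rfl⟩)))
  refine ⟨x, y, fun hxy => ?_⟩
  subst hxy
  simpa using (hx ⟨0, by omega⟩).2 ((hy ⟨0, by omega⟩).1 (by simp))

end Realization

theorem Tcode_lower_bound_general (n d : ℕ)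
    (h : HasOpenRealization (2*n) (Tcode n) d) : (n + 1) / 2 ≤ d := by
  obtain ⟨U, hUc, hUo, hU⟩ := h
  rcases Nat.lt_or_ge n 2 with hn | hn
  · obtain rfl | rfl : n = 0 ∨ n = 1 := by omega
    · simp
    · have := nontrivial_of_codeOf_eq_Tcode hU le_rfl
      have := Module.finrank_pos (R := ℝ) (M := EuclideanSpace ℝ (Fin d))
      rw [finrank_euclideanSpace_fin] at this
      omega
  · have := card_le_two_mul_finrank_of_isSunflower (fun _ => hUo _) (fun _ => hUc _)
      (fun _ => hUo _) (fun _ => hUc _) (isSunflower_of_codeOf_eq_Tcode hU (r := 0) two_pos)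
      (isSunflower_of_codeOf_eq_Tcode hU (r := 1) one_lt_two)
      (nonempty_iInter_of_codeOf_eq_Tcode hU (r := 0) two_pos)
      (nonempty_iInter_of_codeOf_eq_Tcode hU (r := 1) one_lt_two)
      (disjoint_iInter_of_codeOf_eq_Tcode hU hn) (nonempty_inter_of_codeOf_eq_Tcode hU)
    rw [finrank_euclideanSpace_fin] at this
    omega

/-- Any open convex realization of `T n` requires dimension at least `⌈n/2⌉`. -/
theorem Tcode_lower_bound (n d : ℕ) (hn : 1 ≤ n)
    (h : HasOpenRealization (2*n) (Tcode n) d) : (n + 1) / 2 ≤ d :=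
  Tcode_lower_bound_general n d h
end ExtremeCover
end
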